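/- arXiv:1611.03742 — 4 statements merged into one kernel-verified Lean document; each statement's English description precedes it below -/
import Mathlib

section
/- With the notation of the generalized Zermelo navigation problem (positive definite Hermitian h on ℂⁿ, wind W with 0 < ‖W‖_h < f ≤ 1, ε̃ = f² − ‖W‖_h², constant angle φ, a_{ij̄} = h_{ij̄}/ε̃ + cos²φ · W_i W̄_j / ε̃², b_i = −cos φ · W_i/ε̃), one has b^i := Σ_j a^{j̄i} b_{j̄} = (−ε̃ cos φ / (f² − ‖W‖_h² sin²φ)) · W^i, and ‖b‖² := Σ_i b_i b^i = ‖W‖_h² cos²φ / (f² − ‖W‖_h² sin²φ) < 1. -/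
open scoped ComplexOrder

open Matrix

/-!
In matrix language `W_i = (h W̄)_i`, `b = β • (h W̄)` and `a⁻¹ = ε̃ (h⁻¹ − γ W̄ Wᵀ)` with real
scalars `β = −cos φ/ε̃`, `γ = cos²φ/(f² − ‖W‖² sin²φ)`. Raising the index of `h W̄` with `h⁻¹`
returns `W`, and contracting it with the rank-one term returns `‖W‖² W`, so `b^i` is a real
multiple of `W^i`; everything then reduces to the identity
`(f² − ‖W‖² sin²φ) − ‖W‖² cos²φ = f² − ‖W‖² = ε̃`, whose positivity is exactly `‖b‖² < 1`.
-/

theorem Matrix.sum_sum_mul_mul_star_eq_dotProduct {n R : Type*} [Fintype n] [CommSemiring R]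
    [Star R] (h : Matrix n n R) (v : n → R) :
    ∑ i, ∑ j, h i j * v i * star (v j) = v ⬝ᵥ (h *ᵥ star v) := by
  simp only [dotProduct, mulVec, Finset.mul_sum, Pi.star_apply]
  exact Finset.sum_congr rfl fun i _ => Finset.sum_congr rfl fun j _ => by ring

theorem Matrix.PosSemidef.dotProduct_mulVec_star_nonneg {n : Type*} [Fintype n]
    {h : Matrix n n ℂ} (hh : h.PosSemidef) (v : n → ℂ) : 0 ≤ v ⬝ᵥ (h *ᵥ star v) := by
  simpa using hh.dotProduct_mulVec_nonneg (star v)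

theorem Complex.ofReal_sqrt_re_sq {z : ℂ} (hz : 0 ≤ z) : ((√z.re ^ 2 : ℝ) : ℂ) = z := by
  rw [Real.sq_sqrt (nonneg_iff.1 hz).1]
  exact (eq_re_of_ofReal_le (by rwa [ofReal_zero])).symm

theorem Matrix.IsHermitian.star_mulVec_star_vecMul_inv_sub_smul_vecMulVec {n K : Type*}
    [Fintype n] [DecidableEq n] [Field K] [StarRing K] {h : Matrix n n K}
    (hh : h.IsHermitian) (hu : IsUnit h) (v : n → K) (c : K) :
    star (h *ᵥ star v) ᵥ* (h⁻¹ - c • vecMulVec (star v) v) =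
      (1 - c * star (v ⬝ᵥ (h *ᵥ star v))) • v := by
  rw [vecMul_sub, vecMul_smul, vecMul_vecMulVec, star_dotProduct_star, ← vecMul_conjTranspose,
    hh.eq, vecMul_vecMul, mul_nonsing_inv h ((isUnit_iff_isUnit_det h).1 hu), vecMul_one,
    smul_smul, sub_smul, one_smul]

theorem Matrix.PosDef.star_smul_mulVec_star_vecMul_smul_inv_sub {n : Type*} [Fintype n]
    [DecidableEq n] {h : Matrix n n ℂ} (hh : h.PosDef) {v : n → ℂ} {s : ℝ}
    (hs : v ⬝ᵥ (h *ᵥ star v) = s) (β ε γ : ℝ) :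
    star ((β : ℂ) • (h *ᵥ star v)) ᵥ* ((ε : ℂ) • (h⁻¹ - (γ : ℂ) • vecMulVec (star v) v)) =
      ((β * ε * (1 - γ * s) : ℝ) : ℂ) • v := by
  rw [star_smul, vecMul_smul, smul_vecMul,
    hh.isHermitian.star_mulVec_star_vecMul_inv_sub_smul_vecMulVec hh.isUnit, hs]
  simp only [Complex.star_def, Complex.conj_ofReal, smul_smul]
  congr 1
  push_cast
  ring

theorem sq_sub_sq_mul_sin_sq_sub_sq_mul_cos_sq (f w φ : ℝ) :
    f ^ 2 - w ^ 2 * Real.sin φ ^ 2 - w ^ 2 * Real.cos φ ^ 2 = f ^ 2 - w ^ 2 := by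
  linear_combination (-w ^ 2) * Real.sin_sq_add_cos_sq φ

theorem randers_b_norm_lt_one_general {n : ℕ} (h : Matrix (Fin n) (Fin n) ℂ)
    (hposdef : h.PosDef) (W : Fin n → ℂ) (f φ : ℝ)
    (normW : ℝ) (hnormW : normW = Real.sqrt ((∑ i, ∑ j, h i j * W i * star (W j)).re))
    (hWf : normW < f)
    (ε : ℝ) (hε : ε = f ^ 2 - normW ^ 2)
    (Wl : Fin n → ℂ) (hWl : ∀ i, Wl i = ∑ j, h i j * star (W j))
    (b : Fin n → ℂ) (hb : ∀ i, b i = -(Real.cos φ : ℂ) * Wl i / (ε : ℂ))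
    (ainv : Matrix (Fin n) (Fin n) ℂ)
    (hainv : ∀ j i, ainv j i = (ε : ℂ) * (h⁻¹ j i -
      (((Real.cos φ) ^ 2 / (f ^ 2 - normW ^ 2 * (Real.sin φ) ^ 2) : ℝ) : ℂ) *
        W i * star (W j)))
    (bup : Fin n → ℂ) (hbup : ∀ i, bup i = ∑ j, ainv j i * star (b j)) :
    (∀ i, bup i =
        (((-ε * Real.cos φ / (f ^ 2 - normW ^ 2 * (Real.sin φ) ^ 2) : ℝ)) : ℂ) * W i) ∧
    (∑ i, b i * bup i) =
        (((normW ^ 2 * (Real.cos φ) ^ 2 / (f ^ 2 - normW ^ 2 * (Real.sin φ) ^ 2) : ℝ)) : ℂ) ∧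
    normW ^ 2 * (Real.cos φ) ^ 2 / (f ^ 2 - normW ^ 2 * (Real.sin φ) ^ 2) < 1 := by
  set D := f ^ 2 - normW ^ 2 * Real.sin φ ^ 2
  set c := Real.cos φ
  have hε0 : 0 < ε :=
    hε ▸ sub_pos.2 (pow_lt_pow_left₀ hWf (hnormW ▸ Real.sqrt_nonneg _) two_ne_zero)
  have hDε : D - normW ^ 2 * c ^ 2 = ε := hε ▸ sq_sub_sq_mul_sin_sq_sub_sq_mul_cos_sq f normW φ
  have hD0 : 0 < D := by nlinarith
  have hS : W ⬝ᵥ (h *ᵥ star W) = ((normW ^ 2 : ℝ) : ℂ) := by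
    rw [hnormW, sum_sum_mul_mul_star_eq_dotProduct,
      Complex.ofReal_sqrt_re_sq (hposdef.posSemidef.dotProduct_mulVec_star_nonneg W)]
  obtain rfl : Wl = h *ᵥ star W := funext hWl
  have hb_eq : b = ((-c / ε : ℝ) : ℂ) • (h *ᵥ star W) := funext fun i => by
    rw [hb, Pi.smul_apply, smul_eq_mul]; push_cast; ring
  have hainv_eq : ainv = (ε : ℂ) • (h⁻¹ - ((c ^ 2 / D : ℝ) : ℂ) • vecMulVec (star W) W) := by
    ext j i
    rw [hainv, Matrix.smul_apply, Matrix.sub_apply, Matrix.smul_apply, vecMulVec_apply,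
      Pi.star_apply, smul_eq_mul, smul_eq_mul]
    ring
  have hbup_W : bup = ((-ε * c / D : ℝ) : ℂ) • W := by
    have hbup_eq : bup = star b ᵥ* ainv := funext fun i => (hbup i).trans <|
      Finset.sum_congr rfl fun j _ => mul_comm _ _
    have hcoef : -c / ε * ε * (1 - c ^ 2 / D * normW ^ 2) = -ε * c / D := by
      rw [← hDε]; field_simp
    rw [hbup_eq, hainv_eq, hb_eq, hposdef.star_smul_mulVec_star_vecMul_smul_inv_sub hS, hcoef]
  refine ⟨fun i => congrFun hbup_W i, ?_, (div_lt_one hD0).2 (by linarith)⟩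
  change b ⬝ᵥ bup = _
  have hcoef : -c / ε * (-ε * c / D) * normW ^ 2 = normW ^ 2 * c ^ 2 / D := by field_simp
  rw [hbup_W, hb_eq, smul_dotProduct, dotProduct_smul, dotProduct_comm, hS, smul_smul,
    smul_eq_mul]
  exact_mod_cast hcoef

/-- With `b_i = −cos φ · W_i/ε̃` and `a^{j̄i}` the inverse of the Randers metric,
one has `b^i = (−ε̃ cos φ/(f² − ‖W‖²sin²φ)) W^i` and
`‖b‖² = ‖W‖²cos²φ/(f² − ‖W‖²sin²φ) < 1`. -/
theorem randers_b_norm_lt_one {n : ℕ} (h : Matrix (Fin n) (Fin n) ℂ)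
    (hposdef : h.PosDef) (W : Fin n → ℂ) (f φ : ℝ)
    (normW : ℝ) (hnormW : normW = Real.sqrt ((∑ i, ∑ j, h i j * W i * star (W j)).re))
    (hW0 : 0 < normW) (hWf : normW < f) (hf1 : f ≤ 1)
    (ε : ℝ) (hε : ε = f ^ 2 - normW ^ 2)
    (Wl : Fin n → ℂ) (hWl : ∀ i, Wl i = ∑ j, h i j * star (W j))
    (b : Fin n → ℂ) (hb : ∀ i, b i = -(Real.cos φ : ℂ) * Wl i / (ε : ℂ))
    (ainv : Matrix (Fin n) (Fin n) ℂ)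
    (hainv : ∀ j i, ainv j i = (ε : ℂ) * (h⁻¹ j i -
      (((Real.cos φ) ^ 2 / (f ^ 2 - normW ^ 2 * (Real.sin φ) ^ 2) : ℝ) : ℂ) *
        W i * star (W j)))
    (bup : Fin n → ℂ) (hbup : ∀ i, bup i = ∑ j, ainv j i * star (b j)) :
    (∀ i, bup i =
        (((-ε * Real.cos φ / (f ^ 2 - normW ^ 2 * (Real.sin φ) ^ 2) : ℝ)) : ℂ) * W i) ∧
    (∑ i, b i * bup i) =
        (((normW ^ 2 * (Real.cos φ) ^ 2 / (f ^ 2 - normW ^ 2 * (Real.sin φ) ^ 2) : ℝ)) : ℂ) ∧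
    normW ^ 2 * (Real.cos φ) ^ 2 / (f ^ 2 - normW ^ 2 * (Real.sin φ) ^ 2) < 1 :=
  randers_b_norm_lt_one_general h hposdef W f φ normW hnormW hWf ε hε Wl hWl b hb ainv hainv bup
    hbup
end

section
/- Let (a_{ij̄}) be a positive definite Hermitian matrix on ℂⁿ and b = (b_i) a covector with ‖b‖² := Σ a^{j̄i} b_i b_{j̄} satisfying 0 < ‖b‖² < 1. Let f > 0 and set ω̃ = f²(1 − ‖b‖²), h_{ij̄} = ω̃(a_{ij̄} − b_i b_{j̄}), and W^i = f² b^i / ω̃ where b^i = a^{j̄i} b_{j̄}. Then: (1) (h_{ij̄}) is positive definite; (2) ‖W‖_h² := Σ h_{ij̄} W^i W̄^j = f² ‖b‖², so ‖W‖_h < f; (3) ε̃ := f² − ‖W‖_h² = ω̃; and (4) W_i := Σ_j h_{ij̄} W̄^j = ω̃ b_i. -/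
/-!
Put `c = a⁻¹ b`. Since `a⁻¹` is Hermitian, `‖b‖² = b* c` is real, `b^i = c̄_i`, and so
`W̄ = (f² / ω̃) c`. The rank-one identity `(a − b b*) c = (1 − ‖b‖²) b` then gives
`h W̄ = ω̃ b`, which is (4), and pairing it with `W` gives (2) and (3). Positive definiteness
of `a − b b*` is Cauchy–Schwarz for the inner product `⟨x, y⟩_a = x* a y`: as `b* x = ⟨c, x⟩_a`,
`|b* x|² ≤ ⟨c, c⟩_a ⟨x, x⟩_a = ‖b‖² ⟨x, x⟩_a < ⟨x, x⟩_a` for `x ≠ 0`.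
-/

open scoped ComplexOrder Matrix

namespace Matrix

variable {𝕜 n : Type*} [RCLike 𝕜] [Fintype n]

theorem sum_sum_mul_mul_eq_dotProduct_mulVec {R m : Type*} [CommSemiring R] [Fintype m]
    (M : Matrix m n R) (u : m → R) (v : n → R) :
    ∑ i, ∑ j, M i j * u i * v j = u ⬝ᵥ (M *ᵥ v) := by
  simp only [dotProduct, mulVec, Finset.mul_sum]
  exact Finset.sum_congr rfl fun _ _ => Finset.sum_congr rfl fun _ _ => by ring

theorem sum_sum_mul_mul_star_eq_star_dotProduct_mulVec {R : Type*} [CommSemiring R]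
    [StarRing R] (M : Matrix n n R) (b : n → R) :
    ∑ i, ∑ j, M j i * b i * star (b j) = star b ⬝ᵥ (M *ᵥ b) := by
  rw [Finset.sum_comm, ← sum_sum_mul_mul_eq_dotProduct_mulVec]
  simp only [mul_right_comm _ (b _)]
  rfl

theorem IsHermitian.coe_re_star_dotProduct_mulVec_self {M : Matrix n n 𝕜} (hM : M.IsHermitian)
    (x : n → 𝕜) : (RCLike.re (star x ⬝ᵥ (M *ᵥ x)) : 𝕜) = star x ⬝ᵥ (M *ᵥ x) :=
  RCLike.ext (by simp) (by simp [hM.im_star_dotProduct_mulVec_self x])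

theorem IsHermitian.sum_mul_star_eq_star_mulVec {M : Matrix n n 𝕜} (hM : M.IsHermitian)
    (b : n → 𝕜) (i : n) : ∑ j, M j i * star (b j) = star (M *ᵥ b) i := by
  rw [star_mulVec, hM.eq]
  simp [vecMul, dotProduct, mul_comm]

theorem PosSemidef.norm_dotProduct_mulVec_sq_le {M : Matrix n n 𝕜} (hM : M.PosSemidef)
    (x y : n → 𝕜) :
    ‖star x ⬝ᵥ (M *ᵥ y)‖ ^ 2 ≤
      RCLike.re (star x ⬝ᵥ (M *ᵥ x)) * RCLike.re (star y ⬝ᵥ (M *ᵥ y)) := by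
  let := M.toSeminormedAddCommGroup hM
  let := M.toInnerProductSpace hM
  have hinner (u v : n → 𝕜) : inner 𝕜 u v = star u ⬝ᵥ (M *ᵥ v) := dotProduct_comm _ _
  have key := inner_mul_inner_self_le (𝕜 := 𝕜) x y
  rwa [norm_inner_symm y x, ← sq, hinner, hinner, hinner] at key

variable [DecidableEq n]

theorem sub_vecMulVec_mulVec_inv_mulVec {R : Type*} [CommRing R] [StarRing R]
    {A : Matrix n n R} (hA : IsUnit A.det) (b : n → R) :
    (A - vecMulVec b (star b)) *ᵥ (A⁻¹ *ᵥ b) = (1 - star b ⬝ᵥ (A⁻¹ *ᵥ b)) • b := by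
  rw [sub_mulVec, mulVec_mulVec, mul_nonsing_inv A hA, one_mulVec, vecMulVec_mulVec,
    op_smul_eq_smul, sub_smul, one_smul]

theorem PosDef.sub_vecMulVec_self_star {A : Matrix n n 𝕜} (hA : A.PosDef) {b : n → 𝕜}
    (hb : RCLike.re (star b ⬝ᵥ (A⁻¹ *ᵥ b)) < 1) :
    (A - vecMulVec b (star b)).PosDef := by
  have hHerm := hA.isHermitian.sub (posSemidef_vecMulVec_self_star b).isHermitian
  refine of_dotProduct_mulVec_pos hHerm fun x hx =>
    RCLike.pos_iff.mpr ⟨?_, hHerm.im_star_dotProduct_mulVec_self x⟩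
  set c := A⁻¹ *ᵥ b
  have hc : A *ᵥ c = b := by
    rw [mulVec_mulVec, mul_nonsing_inv A ((isUnit_iff_isUnit_det A).mp hA.isUnit), one_mulVec]
  have hb_eq (y : n → 𝕜) : star b ⬝ᵥ y = star c ⬝ᵥ (A *ᵥ y) := by
    rw [dotProduct_mulVec, ← hc, star_mulVec, hA.isHermitian.eq]
  have hform : star x ⬝ᵥ ((A - vecMulVec b (star b)) *ᵥ x)
      = star x ⬝ᵥ (A *ᵥ x) - star (star b ⬝ᵥ x) * (star b ⬝ᵥ x) := by
    rw [sub_mulVec, dotProduct_sub, vecMulVec_mulVec, op_smul_eq_smul, dotProduct_smul,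
      smul_eq_mul, mul_comm, star_dotProduct x b]
  have hCS := hA.posSemidef.norm_dotProduct_mulVec_sq_le c x
  rw [← hb_eq, ← hb_eq] at hCS
  have hx_pos := hA.re_dotProduct_pos hx
  rw [hform, map_sub, RCLike.star_def, RCLike.conj_mul, ← RCLike.ofReal_pow,
    RCLike.ofReal_re]
  nlinarith

end Matrix

open Matrix

theorem zermelo_inverse_construction_general {n : ℕ} (a : Matrix (Fin n) (Fin n) ℂ)
    (haposdef : a.PosDef) (b : Fin n → ℂ) (f : ℝ) (hf : 0 < f)
    (nb : ℝ) (hnb : nb = (∑ i, ∑ j, a⁻¹ j i * b i * star (b j)).re)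
    (hnb1 : nb < 1)
    (ω : ℝ) (hω : ω = f ^ 2 * (1 - nb))
    (h : Matrix (Fin n) (Fin n) ℂ)
    (hh : ∀ i j, h i j = (ω : ℂ) * (a i j - b i * star (b j)))
    (bup : Fin n → ℂ) (hbup : ∀ i, bup i = ∑ j, a⁻¹ j i * star (b j))
    (W : Fin n → ℂ) (hW : ∀ i, W i = (f ^ 2 : ℂ) * bup i / (ω : ℂ))
    (nW : ℝ) (hnW : nW = (∑ i, ∑ j, h i j * W i * star (W j)).re) :
    h.PosDef ∧ nW = f ^ 2 * nb ∧ Real.sqrt nW < f ∧ f ^ 2 - nW = ω ∧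
      ∀ i, (∑ j, h i j * star (W j)) = (ω : ℂ) * b i := by
  have ha_inv : a⁻¹.IsHermitian := haposdef.isHermitian.inv
  have hω_pos : 0 < ω := by rw [hω]; exact mul_pos (by positivity) (by linarith)
  set c := a⁻¹ *ᵥ b
  have hnb_eq : star b ⬝ᵥ c = nb := by
    rw [hnb, sum_sum_mul_mul_star_eq_star_dotProduct_mulVec]
    exact (ha_inv.coe_re_star_dotProduct_mulVec_self b).symm
  have hnb_lt : RCLike.re (star b ⬝ᵥ c) < 1 := by rwa [hnb_eq]
  have hstarW : star W = ((f ^ 2 / ω : ℝ) : ℂ) • c := by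
    ext i
    rw [Pi.star_apply, hW, hbup, ha_inv.sum_mul_star_eq_star_mulVec]
    simp only [Pi.star_apply, star_div₀, star_mul', Pi.smul_apply, smul_eq_mul,
      Complex.star_def, Complex.conj_ofReal, Complex.conj_conj, map_pow]
    push_cast
    ring
  have hh_eq : h = (ω : ℂ) • (a - vecMulVec b (star b)) := by
    ext i j
    simp [hh, vecMulVec_apply]
  have hhW : h *ᵥ star W = (ω : ℂ) • b := by
    rw [hh_eq, hstarW, mulVec_smul, smul_mulVec,
      sub_vecMulVec_mulVec_inv_mulVec ((isUnit_iff_isUnit_det a).mp haposdef.isUnit), hnb_eq,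
      smul_smul, smul_smul]
    congr 1
    exact_mod_cast show f ^ 2 / ω * ω * (1 - nb) = ω by rw [div_mul_cancel₀ _ hω_pos.ne', hω]
  have hnW_eq : nW = f ^ 2 * nb := by
    have hsum : ∑ i, ∑ j, h i j * W i * star (W j) = W ⬝ᵥ (h *ᵥ star W) :=
      sum_sum_mul_mul_eq_dotProduct_mulVec h W (star W)
    rw [hnW, hsum, hhW, dotProduct_smul, ← star_star W, star_dotProduct, hstarW, dotProduct_smul,
      hnb_eq]
    simp only [smul_eq_mul, ← Complex.ofReal_mul, Complex.star_def, Complex.conj_ofReal,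
      Complex.ofReal_re]
    field_simp
  refine ⟨?_, hnW_eq, ?_, by rw [hnW_eq, hω]; ring, fun i => congrFun hhW i⟩
  · rw [hh_eq]
    exact (haposdef.sub_vecMulVec_self_star hnb_lt).smul (by exact_mod_cast hω_pos)
  · rw [hnW_eq, Real.sqrt_lt' hf]
    nlinarith

/-- Inverse construction of the generalized Zermelo navigation problem:
from Randers data `(a, b, f)` with `0 < ‖b‖² < 1`, setting
`ω̃ = f²(1 − ‖b‖²)`, `h_{ij̄} = ω̃(a_{ij̄} − b_i b̄_j)` and `W^i = f² b^i/ω̃`,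
the matrix `h` is positive definite, `‖W‖²_h = f²‖b‖²` (so `‖W‖_h < f`),
`ε̃ = f² − ‖W‖²_h = ω̃` and `W_i = ω̃ b_i`. -/
theorem zermelo_inverse_construction {n : ℕ} (a : Matrix (Fin n) (Fin n) ℂ)
    (haposdef : a.PosDef) (b : Fin n → ℂ) (f : ℝ) (hf : 0 < f)
    (nb : ℝ) (hnb : nb = (∑ i, ∑ j, a⁻¹ j i * b i * star (b j)).re)
    (hnb0 : 0 < nb) (hnb1 : nb < 1)
    (ω : ℝ) (hω : ω = f ^ 2 * (1 - nb))
    (h : Matrix (Fin n) (Fin n) ℂ)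
    (hh : ∀ i j, h i j = (ω : ℂ) * (a i j - b i * star (b j)))
    (bup : Fin n → ℂ) (hbup : ∀ i, bup i = ∑ j, a⁻¹ j i * star (b j))
    (W : Fin n → ℂ) (hW : ∀ i, W i = (f ^ 2 : ℂ) * bup i / (ω : ℂ))
    (nW : ℝ) (hnW : nW = (∑ i, ∑ j, h i j * W i * star (W j)).re) :
    h.PosDef ∧ nW = f ^ 2 * nb ∧ Real.sqrt nW < f ∧ f ^ 2 - nW = ω ∧
      ∀ i, (∑ j, h i j * star (W j)) = (ω : ℂ) * b i :=
  zermelo_inverse_construction_general a haposdef b f hf nb hnb hnb1 ω hω h hh bup hbup W hW nW hnW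
end

section
/- Let h be a Hermitian inner product on ℂⁿ, W ∈ ℂⁿ with ‖W‖_h < f, ε̃ = f² − ‖W‖_h², and suppose h(η, W̄) is a nonpositive real number for some η (i.e. cos φ = −1). Then the Zermelo solution F(η) = (√((Re h(η, W̄))² + ‖η‖_h² ε̃) − Re h(η, W̄))/ε̃ equals α(η) + |β(η)| where α(η) = √(‖η‖_h²/ε̃ + |h(η, W̄)|²/ε̃²) and β(η) = h(η, W̄)/ε̃. -/
/-!
When `h(η, W̄)` is a nonpositive real number `r`, its modulus is `-r`, so
`α² = (r² + ‖η‖² ε̃) / ε̃²` and `|β| = -r / ε̃`; the Zermelo solution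
`(√(r² + ‖η‖² ε̃) - r) / ε̃` is then literally `α + |β|`.
-/

lemma Real.sqrt_div_add_sq_div_sq {a r ε : ℝ} (ha : 0 ≤ a) (hε : 0 < ε) :
    √(a / ε + r ^ 2 / ε ^ 2) = √(r ^ 2 + a * ε) / ε := by
  have hsum : a / ε + r ^ 2 / ε ^ 2 = (r ^ 2 + a * ε) / ε ^ 2 := by
    field_simp
    ring
  rw [hsum, Real.sqrt_div (by positivity), Real.sqrt_sq hε.le]

lemma Real.sqrt_sub_div_eq_of_nonpos {a r ε : ℝ} (ha : 0 ≤ a) (hε : 0 < ε) (hr : r ≤ 0) :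
    (√(r ^ 2 + a * ε) - r) / ε = √(a / ε + |r| ^ 2 / ε ^ 2) + |r| / ε := by
  rw [sq_abs, Real.sqrt_div_add_sq_div_sq ha hε, abs_of_nonpos hr]
  ring

theorem zermelo_randers_decomposition_general {E : Type*} [NormedAddCommGroup E]
    [InnerProductSpace ℂ E] (W : E) (ε : ℝ)
    (hε0 : 0 < ε) (F : E → ℝ)
    (hF : ∀ η, F η =
      (Real.sqrt (((inner ℂ W η : ℂ).re) ^ 2 + ‖η‖ ^ 2 * ε) - (inner ℂ W η : ℂ).re) / ε)
    (η : E)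
    (hreal : (inner ℂ W η : ℂ).im = 0 ∧ (inner ℂ W η : ℂ).re ≤ 0) :
    F η = Real.sqrt (‖η‖ ^ 2 / ε + (‖(inner ℂ W η : ℂ)‖) ^ 2 / ε ^ 2) +
      ‖(inner ℂ W η : ℂ) / (ε : ℂ)‖ := by
  obtain ⟨him, hre⟩ := hreal
  rw [hF, norm_div, Complex.norm_real, Real.norm_of_nonneg hε0.le,
    ← Complex.abs_re_eq_norm.mpr him]
  exact Real.sqrt_sub_div_eq_of_nonpos (by positivity) hε0 hre

/-- When `h(η,W̄)` is a nonpositive real number (`cos φ = −1`), the Zermelo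
solution decomposes in complex Randers form `F = α + |β|` with
`α(η) = √(‖η‖²/ε̃ + |h(η,W̄)|²/ε̃²)` and `β(η) = h(η,W̄)/ε̃`. -/
theorem zermelo_randers_decomposition {E : Type*} [NormedAddCommGroup E]
    [InnerProductSpace ℂ E] (W : E) (f ε : ℝ)
    (hWf : ‖W‖ < f) (hε : ε = f ^ 2 - ‖W‖ ^ 2) (hε0 : 0 < ε) (F : E → ℝ)
    (hF : ∀ η, F η =
      (Real.sqrt (((inner ℂ W η : ℂ).re) ^ 2 + ‖η‖ ^ 2 * ε) - (inner ℂ W η : ℂ).re) / ε)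
    (η : E)
    (hreal : (inner ℂ W η : ℂ).im = 0 ∧ (inner ℂ W η : ℂ).re ≤ 0) :
    F η = Real.sqrt (‖η‖ ^ 2 / ε + (‖(inner ℂ W η : ℂ)‖) ^ 2 / ε ^ 2) +
      ‖(inner ℂ W η : ℂ) / (ε : ℂ)‖ :=
  zermelo_randers_decomposition_general W ε hε0 F hF η hreal
end

section
/- The real function γ²(t) = λ(μ e^{2λkt} − 1)/(μ e^{2λkt} + 1), with real constants λ ≠ 0, μ > 0, k, satisfies the ODE γ̈² + 2γ²(γ̇²)²/(λ² − (γ²)²) = 0, and also γ̇² = k(λ² − (γ²)²). -/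
/-! The curve is `γ(t) = λ tanh(λkt + (log μ)/2)`, so it solves the Riccati equation
`γ̇ = k(λ² − γ²)`. Differentiating once more gives `γ̈ = −2kγγ̇`, while
`γ̇²/(λ² − γ²) = kγ̇`; the two terms of the geodesic equation therefore cancel. -/

open Real

lemma hasDerivAt_mul_exp_sub_one_div_add_one (lam mu k : ℝ) (hmu : 0 ≤ mu) (t : ℝ) :
    HasDerivAt (fun t => lam * (mu * exp (2 * lam * k * t) - 1) / (mu * exp (2 * lam * k * t) + 1))
      (k * (lam ^ 2 - (lam * (mu * exp (2 * lam * k * t) - 1) /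
        (mu * exp (2 * lam * k * t) + 1)) ^ 2)) t := by
  have hE : HasDerivAt (fun t => mu * exp (2 * lam * k * t))
      (mu * (exp (2 * lam * k * t) * (2 * lam * k))) t :=
    (((hasDerivAt_id t).const_mul (2 * lam * k)).exp.congr_deriv (by simp)).const_mul mu
  have hden : mu * exp (2 * lam * k * t) + 1 ≠ 0 := by positivity
  refine (((hE.sub_const 1).const_mul lam).div (hE.add_const 1) hden).congr_deriv ?_
  field_simp
  ring

lemma deriv_deriv_add_of_hasDerivAt_riccati {f : ℝ → ℝ} {c k : ℝ}
    (hf : ∀ t, HasDerivAt f (k * (c - f t ^ 2)) t) (t : ℝ) :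
    deriv (deriv f) t + 2 * f t * (deriv f t) ^ 2 / (c - f t ^ 2) = 0 := by
  have hderiv : deriv f = fun t => k * (c - f t ^ 2) := funext fun t => (hf t).deriv
  have hsecond : deriv (deriv f) t = -2 * k * f t * deriv f t := by
    rw [hderiv, ((((hf t).fun_pow 2).const_sub c).const_mul k).deriv]
    push_cast
    ring
  -- `x² / x = x` holds in a field even at `x = 0`, where Lean sets `x / 0 = 0`.
  have hquot : (deriv f t) ^ 2 / (c - f t ^ 2) = k * deriv f t := by
    rw [hderiv, mul_pow, mul_div_assoc, sq (c - f t ^ 2), mul_self_div_self]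
    ring
  rw [hsecond, mul_div_assoc, hquot]
  ring

theorem hartogs_geodesic_ode_general (lam mu k : ℝ) (hmu : 0 < mu)
    (γ : ℝ → ℝ)
    (hγ : ∀ t, γ t = lam * (mu * Real.exp (2 * lam * k * t) - 1) /
      (mu * Real.exp (2 * lam * k * t) + 1)) :
    (∀ t, deriv γ t = k * (lam ^ 2 - (γ t) ^ 2)) ∧
    (∀ t, deriv (deriv γ) t +
      2 * γ t * (deriv γ t) ^ 2 / (lam ^ 2 - (γ t) ^ 2) = 0) := by
  obtain rfl : γ = _ := funext hγ
  have hriccati := hasDerivAt_mul_exp_sub_one_div_add_one lam mu k hmu.le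
  exact ⟨fun t => (hriccati t).deriv, deriv_deriv_add_of_hasDerivAt_riccati hriccati⟩

/-- The function `γ²(t) = λ(μ e^{2λkt} − 1)/(μ e^{2λkt} + 1)` satisfies
`γ̇² = k(λ² − (γ²)²)` and the geodesic ODE
`γ̈² + 2γ²(γ̇²)²/(λ² − (γ²)²) = 0`. -/
theorem hartogs_geodesic_ode (lam mu k : ℝ) (hlam : lam ≠ 0) (hmu : 0 < mu)
    (γ : ℝ → ℝ)
    (hγ : ∀ t, γ t = lam * (mu * Real.exp (2 * lam * k * t) - 1) /
      (mu * Real.exp (2 * lam * k * t) + 1)) :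
    (∀ t, deriv γ t = k * (lam ^ 2 - (γ t) ^ 2)) ∧
    (∀ t, deriv (deriv γ) t +
      2 * γ t * (deriv γ t) ^ 2 / (lam ^ 2 - (γ t) ^ 2) = 0) :=
  hartogs_geodesic_ode_general lam mu k hmu γ hγ
end
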